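/- Let k be an algebraically closed field of characteristic 2, ζ ∈ k a primitive cube root of unity, and n ≥ 1 an integer. Let H = ⟨σ, τ⟩ be a Klein four group. Then the 2n-dimensional representation of H over k given in block form by σ ↦ [[I_n, ζ(I_n + J_n(1))], [0, I_n]] and τ ↦ [[I_n, ζ²I_n + J_n(1)], [0, I_n]] is isomorphic to the representation given by σ ↦ [[I_n, J_n(0)], [0, I_n]] and τ ↦ [[I_n, I_n], [0, I_n]]. -/

import Mathlib

/-!
In characteristic 2, `1 + J(1) = J(0) =: N` and `ζ² + J(1) = J(ζ)`, so both representations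
send `σ` and `τ` to block unipotent matrices `[[1, X], [0, 1]]`, and conjugating by
`diag(A, B)` replaces `X` by `A X B⁻¹`. Taking `B = A J(ζ)` turns the `τ`-block `J(ζ)`
into `1`, and then the `σ`-block `ζ N` is carried to `N` exactly when `A G = N A` for
`G = ζ N J(ζ)⁻¹ = N (1 - ζ² N)⁻¹`. This `G` is strictly upper triangular with ones on the
superdiagonal, so `e_{n-1}` is a cyclic vector for it: the Krylov matrix with columns
`G^(n-1-j) e_{n-1}` is unitriangular and conjugates `G` to `N`.
-/

/-- The `n × n` upper-triangular Jordan block over `k` with eigenvalue `lam`. -/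
def jordanBlock (k : Type) [Field k] (n : ℕ) (lam : k) : Matrix (Fin n) (Fin n) k :=
  Matrix.of fun i j => if i = j then lam else if (i : ℕ) + 1 = (j : ℕ) then 1 else 0

open Matrix

section Superdiagonal

variable {R : Type*} [Semiring R] {n : ℕ} {M : Matrix (Fin n) (Fin n) R}

lemma pow_apply_eq_zero_of_lt (hlow : ∀ i j : Fin n, (j : ℕ) ≤ i → M i j = 0) (p : ℕ)
    {i j : Fin n} (h : (j : ℕ) < i + p) : (M ^ p) i j = 0 := by
  induction p generalizing i with
  | zero => exact one_apply_ne (fun hij => by subst hij; omega)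
  | succ p ih =>
    rw [pow_succ', mul_apply]
    refine Finset.sum_eq_zero fun l _ => ?_
    rcases le_or_gt (l : ℕ) i with hli | hil
    · rw [hlow i l hli, zero_mul]
    · rw [ih (by omega), mul_zero]

lemma pow_apply_eq_one_of_add_eq (hlow : ∀ i j : Fin n, (j : ℕ) ≤ i → M i j = 0)
    (hsup : ∀ i j : Fin n, (i : ℕ) + 1 = j → M i j = 1) (p : ℕ)
    {i j : Fin n} (h : (i : ℕ) + p = j) : (M ^ p) i j = 1 := by
  induction p generalizing i with
  | zero =>
    obtain rfl : i = j := Fin.ext (by omega)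
    exact one_apply_eq i
  | succ p ih =>
    let i' : Fin n := ⟨i + 1, by omega⟩
    rw [pow_succ', mul_apply, Finset.sum_eq_single i']
    · rw [hsup i i' rfl, ih (i := i') (by simp [i']; omega), one_mul]
    · intro l _ hl
      rcases le_or_gt (l : ℕ) i with hli | hil
      · rw [hlow i l hli, zero_mul]
      · rw [pow_apply_eq_zero_of_lt hlow p (by simp [i', Fin.ext_iff] at hl; omega), mul_zero]
    · simp

end Superdiagonal

section JordanBlock

variable {k : Type} [Field k] {n : ℕ}

lemma jordanBlock_eq_smul_one_add (a : k) :
    jordanBlock k n a = a • 1 + jordanBlock k n 0 := by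
  ext i j
  by_cases hij : i = j <;> simp [jordanBlock, one_apply, hij]

lemma smul_one_add_jordanBlock (c a : k) :
    c • 1 + jordanBlock k n a = jordanBlock k n (c + a) := by
  rw [jordanBlock_eq_smul_one_add a, jordanBlock_eq_smul_one_add (c + a), add_smul, add_assoc]

lemma jordanBlock_zero_apply (i j : Fin n) :
    jordanBlock k n 0 i j = if (i : ℕ) + 1 = j then 1 else 0 := by
  by_cases hij : i = j
  · subst hij; simp [jordanBlock]
  · simp [jordanBlock, hij]

lemma mul_jordanBlock_zero_apply (X : Matrix (Fin n) (Fin n) k) (i j : Fin n) :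
    (X * jordanBlock k n 0) i j = if h : 0 < (j : ℕ) then X i ⟨j - 1, by omega⟩ else 0 := by
  simp only [mul_apply, jordanBlock_zero_apply, mul_ite, mul_one, mul_zero]
  split_ifs with hj
  · rw [Finset.sum_eq_single ⟨j - 1, by omega⟩, if_pos (by simp; omega)]
    · exact fun l _ hl => if_neg fun h => hl (Fin.ext (by simp; omega))
    · simp
  · exact Finset.sum_eq_zero fun l _ => if_neg (by omega)

lemma jordanBlock_isUpperTriangular (a : k) : (jordanBlock k n a).IsUpperTriangular := by
  intro i j (hji : j < i)
  simp [jordanBlock, hji.ne', show (i : ℕ) + 1 ≠ j by have : (j : ℕ) < i := hji; omega]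

lemma det_jordanBlock (a : k) : (jordanBlock k n a).det = a ^ n := by
  rw [det_of_isUpperTriangular (jordanBlock_isUpperTriangular a)]
  simp [jordanBlock]

theorem exists_mul_eq_jordanBlock_zero_mul {M : Matrix (Fin n) (Fin n) k}
    (hlow : ∀ i j : Fin n, (j : ℕ) ≤ i → M i j = 0)
    (hsup : ∀ i j : Fin n, (i : ℕ) + 1 = j → M i j = 1) :
    ∃ A : Matrix (Fin n) (Fin n) k, A.det ≠ 0 ∧ A * M = jordanBlock k n 0 * A := by
  cases n with
  | zero => exact ⟨1, by simp, Subsingleton.elim _ _⟩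
  | succ m =>
    let Q : Matrix (Fin (m + 1)) (Fin (m + 1)) k := of fun i j => (M ^ (m - j)) i (Fin.last m)
    have hQ : Q.IsUpperTriangular := fun i j (hji : j < i) =>
      pow_apply_eq_zero_of_lt hlow _ (by simp; omega)
    have hdet : Q.det = 1 := by
      rw [det_of_isUpperTriangular hQ]
      exact Finset.prod_eq_one fun i _ => pow_apply_eq_one_of_add_eq hlow hsup _ (by simp; omega)
    have hMQ : M * Q = Q * jordanBlock k (m + 1) 0 := by
      ext i j
      have hcol : (M * Q) i j = (M ^ (m - j + 1)) i (Fin.last m) := by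
        rw [pow_succ', mul_apply, mul_apply]; rfl
      rw [hcol, mul_jordanBlock_zero_apply]
      split_ifs with hj
      · simp only [Q, of_apply, show m - (j - 1 : ℕ) = m - j + 1 by omega]
      · exact pow_apply_eq_zero_of_lt hlow _ (by simp only [Fin.val_last]; omega)
    have : Invertible Q := Q.invertibleOfIsUnitDet (by simp [hdet])
    refine ⟨Q⁻¹, by simp [hdet], ?_⟩
    calc Q⁻¹ * M = Q⁻¹ * (M * Q * Q⁻¹) := by rw [mul_inv_cancel_right_of_invertible]
      _ = Q⁻¹ * (Q * (jordanBlock k (m + 1) 0 * Q⁻¹)) := by rw [hMQ, Matrix.mul_assoc]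
      _ = jordanBlock k (m + 1) 0 * Q⁻¹ := inv_mul_cancel_left_of_invertible _ _

/-- The matrix `N (1 - c N)⁻¹ = ∑ₚ cᵖ Nᵖ⁺¹` for `N = J(0)`. -/
def geomShift (k : Type) [Field k] (n : ℕ) (c : k) : Matrix (Fin n) (Fin n) k :=
  of fun i j => if (i : ℕ) < j then c ^ ((j : ℕ) - i - 1) else 0

lemma geomShift_apply_of_le {c : k} {i j : Fin n} (h : (j : ℕ) ≤ i) : geomShift k n c i j = 0 :=
  if_neg (by omega)

lemma geomShift_apply_of_add_one_eq {c : k} {i j : Fin n} (h : (i : ℕ) + 1 = j) :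
    geomShift k n c i j = 1 := by
  rw [geomShift, of_apply, if_pos (by omega), show (j : ℕ) - i - 1 = 0 by omega, pow_zero]

lemma geomShift_mul_jordanBlock {a c : k} (h : a * c + 1 = 0) :
    geomShift k n c * jordanBlock k n a = a • jordanBlock k n 0 := by
  rw [jordanBlock_eq_smul_one_add a, mul_add, mul_smul_comm, mul_one]
  ext i j
  rw [Matrix.add_apply, Matrix.smul_apply, Matrix.smul_apply, mul_jordanBlock_zero_apply,
    jordanBlock_zero_apply]
  simp only [geomShift, of_apply, smul_eq_mul]
  by_cases hij : (i : ℕ) < j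
  · obtain ⟨d, hd⟩ : ∃ d, (j : ℕ) = i + 1 + d := ⟨j - i - 1, by omega⟩
    rcases d with _ | d
    · simp [hd]
    · have hpow : c ^ ((j : ℕ) - i - 1) = c * c ^ d := by rw [← pow_succ']; congr 1; omega
      simp only [hij, if_true, dif_pos (show 0 < (j : ℕ) by omega), hpow,
        show (i : ℕ) < j - 1 by omega, show (j : ℕ) - 1 - i - 1 = d by omega,
        show (i : ℕ) + 1 ≠ j by omega, if_false]
      linear_combination c ^ d * h
  · simp [hij, show (i : ℕ) + 1 ≠ j by omega, show ¬ (i : ℕ) < j - 1 by omega]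

lemma fromBlocks_mul_fromBlocks_one_of_mul_eq {R : Type*} [Semiring R] {m n : Type*}
    [Fintype m] [Fintype n] [DecidableEq m] [DecidableEq n]
    {A : Matrix m m R} {B : Matrix n n R} {X Y : Matrix m n R} (h : A * X = Y * B) :
    fromBlocks A 0 0 B * fromBlocks 1 X 0 1 = fromBlocks 1 Y 0 1 * fromBlocks A 0 0 B := by
  simp [fromBlocks_multiply, h]

theorem stmt_11_general (k : Type) [Field k] [CharP k 2]
    (ζ : k) (hζ : IsPrimitiveRoot ζ 3)
    (n : ℕ)
    (H : Type) [Group H] (σ τ : H)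
    (hgen : Subgroup.closure {σ, τ} = (⊤ : Subgroup H))
    (V W : H →* Matrix.GeneralLinearGroup (Fin n ⊕ Fin n) k)
    (hVσ : (V σ : Matrix (Fin n ⊕ Fin n) (Fin n ⊕ Fin n) k) =
      Matrix.fromBlocks 1 (ζ • (1 + jordanBlock k n 1)) 0 1)
    (hVτ : (V τ : Matrix (Fin n ⊕ Fin n) (Fin n ⊕ Fin n) k) =
      Matrix.fromBlocks 1 (ζ ^ 2 • (1 : Matrix (Fin n) (Fin n) k) + jordanBlock k n 1) 0 1)
    (hWσ : (W σ : Matrix (Fin n ⊕ Fin n) (Fin n ⊕ Fin n) k) =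
      Matrix.fromBlocks 1 (jordanBlock k n 0) 0 1)
    (hWτ : (W τ : Matrix (Fin n ⊕ Fin n) (Fin n ⊕ Fin n) k) =
      Matrix.fromBlocks 1 1 0 1) :
    ∃ P : Matrix.GeneralLinearGroup (Fin n ⊕ Fin n) k,
      ∀ h : H, P * V h * P⁻¹ = W h := by
  have hζsum : 1 + ζ + ζ ^ 2 = 0 := by
    simpa [Finset.sum_range_succ] using hζ.geom_sum_eq_zero (by norm_num)
  have hσblock : ζ • (1 + jordanBlock k n 1) = ζ • jordanBlock k n 0 := by
    rw [← one_smul k (1 : Matrix (Fin n) (Fin n) k), smul_one_add_jordanBlock,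
      CharTwo.add_self_eq_zero]
  have hτblock :
      ζ ^ 2 • (1 : Matrix (Fin n) (Fin n) k) + jordanBlock k n 1 = jordanBlock k n ζ := by
    rw [smul_one_add_jordanBlock]
    congr 1
    linear_combination hζsum - ζ * CharTwo.two_eq_zero (R := k)
  obtain ⟨A, hA, hAG⟩ := exists_mul_eq_jordanBlock_zero_mul (M := geomShift k n (ζ ^ 2))
    (fun _ _ => geomShift_apply_of_le) (fun _ _ => geomShift_apply_of_add_one_eq)
  let P := GeneralLinearGroup.mkOfDetNeZero (fromBlocks A 0 0 (A * jordanBlock k n ζ)) <| by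
    rw [det_fromBlocks_zero₂₁, det_mul, det_jordanBlock]
    exact mul_ne_zero hA (mul_ne_zero hA (pow_ne_zero _ (hζ.ne_zero (by norm_num))))
  have hPσ : P * V σ = W σ * P := Units.ext <| by
    rw [Units.val_mul, Units.val_mul, hVσ, hσblock, hWσ]
    refine fromBlocks_mul_fromBlocks_one_of_mul_eq ?_
    have hζ3 : ζ * ζ ^ 2 + 1 = 0 := by
      linear_combination hζ.pow_eq_one + CharTwo.two_eq_zero (R := k)
    rw [← Matrix.mul_assoc, ← hAG, Matrix.mul_assoc, geomShift_mul_jordanBlock hζ3]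
  have hPτ : P * V τ = W τ * P := Units.ext <| by
    rw [Units.val_mul, Units.val_mul, hVτ, hτblock, hWτ]
    exact fromBlocks_mul_fromBlocks_one_of_mul_eq (one_mul _).symm
  have hconj : (MulAut.conj P).toMonoidHom.comp V = W := by
    refine MonoidHom.eq_of_eqOn_dense hgen ?_
    rintro g (rfl | rfl) <;> simp [hPσ, hPτ]
  exact ⟨P, fun h => DFunLike.congr_fun hconj h⟩

/-- **Lemma.** For the Klein four group `H = ⟨σ, τ⟩` over an algebraically closed field
`k` of characteristic 2 with primitive cube root of unity `ζ`, the representation given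
by `σ ↦ [[I, ζ(I + Jₙ(1))], [0, I]]`, `τ ↦ [[I, ζ²I + Jₙ(1)], [0, I]]` is isomorphic to
the one given by `σ ↦ [[I, Jₙ(0)], [0, I]]`, `τ ↦ [[I, I], [0, I]]`. -/
theorem stmt_11 (k : Type) [Field k] [IsAlgClosed k] [CharP k 2]
    (ζ : k) (hζ : IsPrimitiveRoot ζ 3)
    (n : ℕ) (hn : 1 ≤ n)
    (H : Type) [Group H] (σ τ : H)
    (hσ1 : σ ≠ 1) (hτ1 : τ ≠ 1) (hστ : σ ≠ τ)
    (hσ : σ ^ 2 = 1) (hτ : τ ^ 2 = 1) (hcomm : σ * τ = τ * σ)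
    (hgen : Subgroup.closure {σ, τ} = (⊤ : Subgroup H))
    (V W : H →* Matrix.GeneralLinearGroup (Fin n ⊕ Fin n) k)
    (hVσ : (V σ : Matrix (Fin n ⊕ Fin n) (Fin n ⊕ Fin n) k) =
      Matrix.fromBlocks 1 (ζ • (1 + jordanBlock k n 1)) 0 1)
    (hVτ : (V τ : Matrix (Fin n ⊕ Fin n) (Fin n ⊕ Fin n) k) =
      Matrix.fromBlocks 1 (ζ ^ 2 • (1 : Matrix (Fin n) (Fin n) k) + jordanBlock k n 1) 0 1)
    (hWσ : (W σ : Matrix (Fin n ⊕ Fin n) (Fin n ⊕ Fin n) k) =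
      Matrix.fromBlocks 1 (jordanBlock k n 0) 0 1)
    (hWτ : (W τ : Matrix (Fin n ⊕ Fin n) (Fin n ⊕ Fin n) k) =
      Matrix.fromBlocks 1 1 0 1) :
    ∃ P : Matrix.GeneralLinearGroup (Fin n ⊕ Fin n) k,
      ∀ h : H, P * V h * P⁻¹ = W h :=
  stmt_11_general k ζ hζ n H σ τ hgen V W hVσ hVτ hWσ hWτ
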